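/- Let n ≥ 3 be an integer, α ∈ [0,1), and ρ > 0. Then there exist constants 0 < c ≤ C, depending only on n and α, such that for every r with 0 < r < ρ: c·r^{2−n+α} ≤ ∫_{B_ρ ∩ {xₙ > 0}} |x + r eₙ|^{2−2n+α} dx ≤ C·r^{2−n+α}, where B_ρ is the open ball of radius ρ centered at the origin of ℝⁿ and eₙ is the n-th standard basis vector. In particular the integral is finite. -/

import Mathlib

open MeasureTheory Metric

/-! Put `β = 2 - 2n + α < -n` and `v = r eₙ`. Translation by `v` maps the half-space into the
exterior of `closedBall 0 r`, and by scaling `∫_{‖y‖ > r} ‖y‖^β = r^(β+n) ∫_{‖y‖ > 1} ‖y‖^β`, which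
is finite because `β < -n`. Conversely the half-space part of `B_ρ` contains the ball of radius
`r/2` about `(r/2) eₙ`, on which `‖x + v‖ ≤ 2r`, so the integral is at least
`(2r)^β (r/2)^n |B_1| = 2^(β-n) |B_1| r^(β+n)`. -/

open Set Module
open scoped Pointwise

lemma Real.rpow_le_mul_rpow_one_add {β R t : ℝ} (hβ : β ≤ 0) (hR : 0 < R) (ht : R < t) :
    t ^ β ≤ (1 + R⁻¹) ^ (-β) * (1 + t) ^ β := by
  have ht0 : 0 < t := hR.trans ht
  have hc : 0 < 1 + R⁻¹ := by positivity
  have hle : 1 + t ≤ (1 + R⁻¹) * t := by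
    have : 1 ≤ R⁻¹ * t := by rw [le_inv_mul_iff₀ hR]; linarith
    linarith
  calc t ^ β = (1 + R⁻¹) ^ (-β) * ((1 + R⁻¹) * t) ^ β := by
        rw [Real.mul_rpow hc.le ht0.le, ← mul_assoc, ← Real.rpow_add hc, neg_add_cancel,
          Real.rpow_zero, one_mul]
    _ ≤ (1 + R⁻¹) ^ (-β) * (1 + t) ^ β := by
        gcongr _ * ?_
        exact Real.rpow_le_rpow_of_nonpos (by positivity) hle hβ

section HaarExterior

variable {E : Type*} [NormedAddCommGroup E] [NormedSpace ℝ E]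

lemma smul_compl_closedBall_one {R : ℝ} (hR : 0 < R) :
    R • (closedBall (0 : E) 1)ᶜ = (closedBall 0 R)ᶜ := by
  ext y
  rw [mem_smul_set_iff_inv_smul_mem₀ hR.ne']
  simp only [mem_compl_iff, mem_closedBall_zero_iff, norm_smul, norm_inv, Real.norm_of_nonneg hR.le,
    inv_mul_le_iff₀ hR, mul_one]

variable [FiniteDimensional ℝ E] [MeasurableSpace E] [BorelSpace E] (μ : Measure E)
  [μ.IsAddHaarMeasure]

lemma integrableOn_compl_closedBall_rpow_norm {β : ℝ} (hβ : β < -(finrank ℝ E : ℝ)) {R : ℝ}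
    (hR : 0 < R) : IntegrableOn (fun y : E => ‖y‖ ^ β) (closedBall 0 R)ᶜ μ := by
  have hdom : Integrable (fun y : E => (1 + R⁻¹) ^ (-β) * (1 + ‖y‖) ^ β) μ := by
    simpa using (integrable_one_add_norm (μ := μ) (r := -β) (by linarith)).const_mul
      ((1 + R⁻¹) ^ (-β))
  refine hdom.integrableOn.mono' (continuous_norm.measurable.pow_const β).aestronglyMeasurable ?_
  filter_upwards [self_mem_ae_restrict measurableSet_closedBall.compl] with y hy
  have hy : R < ‖y‖ := by simpa using hy
  rw [Real.norm_of_nonneg (Real.rpow_nonneg (norm_nonneg y) β)]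
  exact Real.rpow_le_mul_rpow_one_add (by linarith [(finrank ℝ E).cast_nonneg (α := ℝ)])
    hR hy

lemma setIntegral_compl_closedBall_rpow_norm (β : ℝ) {R : ℝ} (hR : 0 < R) :
    ∫ y in (closedBall (0 : E) R)ᶜ, ‖y‖ ^ β ∂μ =
      R ^ (β + finrank ℝ E) * ∫ y in (closedBall (0 : E) 1)ᶜ, ‖y‖ ^ β ∂μ := by
  have hscale := μ.setIntegral_comp_smul_of_pos (fun y : E => ‖y‖ ^ β) (closedBall 0 1)ᶜ hR
  simp only [norm_smul, Real.norm_of_nonneg hR.le, Real.mul_rpow hR.le (norm_nonneg _),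
    integral_const_mul, smul_compl_closedBall_one hR, smul_eq_mul] at hscale
  rw [eq_inv_mul_iff_mul_eq₀ (by positivity)] at hscale
  rw [← hscale, Real.rpow_add hR, Real.rpow_natCast]
  ring

end HaarExterior

section Translation

variable {G : Type*} [AddGroup G] [MeasurableSpace G] [MeasurableAdd G] (μ : Measure G)
  [μ.IsAddRightInvariant] {g : G → ℝ} {S T : Set G} {v : G}

lemma integrableOn_comp_add_right_of_mapsTo (hg : IntegrableOn g T μ)
    (hST : MapsTo (· + v) S T) : IntegrableOn (fun x => g (x + v)) S μ :=
  (((measurePreserving_add_right μ v).integrableOn_comp_preimage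
    (measurableEmbedding_addRight v)).mpr hg).mono_set hST

lemma setIntegral_comp_add_right_le_of_mapsTo (hg : IntegrableOn g T μ) (hg0 : 0 ≤ g)
    (hST : MapsTo (· + v) S T) : ∫ x in S, g (x + v) ∂μ ≤ ∫ y in T, g y ∂μ := by
  calc ∫ x in S, g (x + v) ∂μ ≤ ∫ x in (· + v) ⁻¹' T, g (x + v) ∂μ :=
        setIntegral_mono_set (integrableOn_comp_add_right_of_mapsTo μ hg (mapsTo_preimage _ T))
          (.of_forall fun x => hg0 (x + v)) (mapsTo_iff_subset_preimage.mp hST).eventuallyLE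
    _ = ∫ y in T, g y ∂μ :=
        (measurePreserving_add_right μ v).setIntegral_preimage_emb
          (measurableEmbedding_addRight v) g T

end Translation

namespace EuclideanSpace

variable {n : ℕ} {i : Fin n}

lemma lt_norm_add_smul_single {x : EuclideanSpace ℝ (Fin n)} (hx : 0 < x i) {r : ℝ} :
    r < ‖x + r • single i (1 : ℝ)‖ :=
  calc r < x i + r := by linarith
    _ ≤ |x i + r| := le_abs_self _
    _ = ‖(x + r • single i (1 : ℝ)) i‖ := by simp
    _ ≤ ‖x + r • single i (1 : ℝ)‖ := PiLp.norm_apply_le _ i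

lemma mapsTo_add_smul_single_compl_closedBall (r : ℝ) :
    MapsTo (· + r • single i (1 : ℝ)) {x : EuclideanSpace ℝ (Fin n) | 0 < x i} (closedBall 0 r)ᶜ :=
  fun _ hx => by simpa using lt_norm_add_smul_single hx

lemma ball_half_smul_single_subset {r : ℝ} (hr : 0 < r) :
    ball ((r / 2) • single i 1) (r / 2) ⊆
      ball (0 : EuclideanSpace ℝ (Fin n)) r ∩ {x | 0 < x i} := by
  set p : EuclideanSpace ℝ (Fin n) := (r / 2) • single i 1
  intro x hx
  have hxp : ‖x - p‖ < r / 2 := mem_ball_iff_norm.mp hx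
  have hp : ‖p‖ = r / 2 := by simp [p, norm_smul, abs_of_pos hr]
  have hdist : |x i - r / 2| < r / 2 :=
    calc |x i - r / 2| = ‖(x - p) i‖ := by simp [p]
      _ ≤ ‖x - p‖ := PiLp.norm_apply_le _ i
      _ < r / 2 := hxp
  refine ⟨mem_ball_zero_iff.mpr ?_, show 0 < x i by linarith [(abs_lt.mp hdist).1]⟩
  calc ‖x‖ ≤ ‖x - p‖ + ‖p‖ := norm_le_norm_sub_add _ _
    _ < r := by linarith

variable {β : ℝ}

lemma integrableOn_rpow_norm_add_smul_single (hβ : β < -(n : ℝ)) {r : ℝ} (hr : 0 < r)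
    {S : Set (EuclideanSpace ℝ (Fin n))} (hS : S ⊆ {x | 0 < x i}) :
    IntegrableOn (fun x => ‖x + r • single i (1 : ℝ)‖ ^ β) S :=
  integrableOn_comp_add_right_of_mapsTo volume
    (integrableOn_compl_closedBall_rpow_norm volume (by rwa [finrank_euclideanSpace_fin]) hr)
    ((mapsTo_add_smul_single_compl_closedBall r).mono_left hS)

lemma setIntegral_rpow_norm_add_smul_single_le (hβ : β < -(n : ℝ)) {r : ℝ} (hr : 0 < r)
    {S : Set (EuclideanSpace ℝ (Fin n))} (hS : S ⊆ {x | 0 < x i}) :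
    ∫ x in S, ‖x + r • single i (1 : ℝ)‖ ^ β ≤
      (∫ y in (closedBall (0 : EuclideanSpace ℝ (Fin n)) 1)ᶜ, ‖y‖ ^ β) * r ^ (β + n) := by
  calc ∫ x in S, ‖x + r • single i (1 : ℝ)‖ ^ β
      ≤ ∫ y in (closedBall (0 : EuclideanSpace ℝ (Fin n)) r)ᶜ, ‖y‖ ^ β :=
        setIntegral_comp_add_right_le_of_mapsTo volume
          (integrableOn_compl_closedBall_rpow_norm volume (by rwa [finrank_euclideanSpace_fin]) hr)
          (fun y => Real.rpow_nonneg (norm_nonneg y) β)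
          ((mapsTo_add_smul_single_compl_closedBall r).mono_left hS)
    _ = _ := by rw [setIntegral_compl_closedBall_rpow_norm volume β hr, finrank_euclideanSpace_fin,
          mul_comm]

lemma le_setIntegral_rpow_norm_add_smul_single (hβ : β ≤ 0) {ρ r : ℝ} (hr : 0 < r) (hrρ : r ≤ ρ)
    (hf : IntegrableOn (fun x => ‖x + r • single i (1 : ℝ)‖ ^ β) (ball 0 ρ ∩ {x | 0 < x i})) :
    2 ^ (β - n) * volume.real (ball (0 : EuclideanSpace ℝ (Fin n)) 1) * r ^ (β + n) ≤
      ∫ x in ball 0 ρ ∩ {x | 0 < x i}, ‖x + r • single i (1 : ℝ)‖ ^ β := by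
  set B := ball ((r / 2) • single i (1 : ℝ)) (r / 2)
  have hBS : B ⊆ ball 0 ρ ∩ {x | 0 < x i} :=
    (ball_half_smul_single_subset hr).trans (inter_subset_inter_left _ (ball_subset_ball hrρ))
  have hvolB :
      volume.real B = (r / 2) ^ n * volume.real (ball (0 : EuclideanSpace ℝ (Fin n)) 1) := by
    rw [measureReal_def, measureReal_def, Measure.addHaar_ball_of_pos _ _ (by positivity),
      finrank_euclideanSpace_fin, ENNReal.toReal_mul, ENNReal.toReal_ofReal (by positivity)]
  have hbound : ∀ x ∈ B, (2 * r) ^ β ≤ ‖x + r • single i (1 : ℝ)‖ ^ β := by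
    intro x hx
    have hx' := ball_half_smul_single_subset hr hx
    refine Real.rpow_le_rpow_of_nonpos (hr.trans (lt_norm_add_smul_single hx'.2)) ?_ hβ
    calc ‖x + r • single i (1 : ℝ)‖ ≤ ‖x‖ + ‖r • single i (1 : ℝ)‖ := norm_add_le _ _
      _ ≤ 2 * r := by
        simp only [norm_smul, PiLp.norm_single, norm_one, Real.norm_of_nonneg hr.le, mul_one]
        linarith [mem_ball_zero_iff.mp hx'.1]
  calc 2 ^ (β - n) * volume.real (ball (0 : EuclideanSpace ℝ (Fin n)) 1) * r ^ (β + n)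
      = (2 * r) ^ β * volume.real B := by
        rw [hvolB, Real.mul_rpow zero_le_two hr.le, Real.rpow_sub two_pos, Real.rpow_add hr,
          Real.rpow_natCast, Real.rpow_natCast, div_pow]
        field_simp
    _ ≤ ∫ x in B, ‖x + r • single i (1 : ℝ)‖ ^ β :=
        setIntegral_ge_of_const_le_real measurableSet_ball measure_ball_lt_top.ne hbound
          (hf.mono_set hBS)
    _ ≤ ∫ x in ball 0 ρ ∩ {x | 0 < x i}, ‖x + r • single i (1 : ℝ)‖ ^ β :=
        setIntegral_mono_set hf (.of_forall fun x => Real.rpow_nonneg (norm_nonneg _) β)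
          hBS.eventuallyLE

lemma integrableOn_and_setIntegral_rpow_norm_add_smul_single_bounds (hβ : β < -(n : ℝ))
    {ρ r : ℝ} (hr : 0 < r) (hrρ : r ≤ ρ) :
    IntegrableOn (fun x => ‖x + r • single i (1 : ℝ)‖ ^ β) (ball 0 ρ ∩ {x | 0 < x i}) ∧
    2 ^ (β - n) * volume.real (ball (0 : EuclideanSpace ℝ (Fin n)) 1) * r ^ (β + n) ≤
      ∫ x in ball 0 ρ ∩ {x | 0 < x i}, ‖x + r • single i (1 : ℝ)‖ ^ β ∧
    ∫ x in ball 0 ρ ∩ {x | 0 < x i}, ‖x + r • single i (1 : ℝ)‖ ^ β ≤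
      (∫ y in (closedBall (0 : EuclideanSpace ℝ (Fin n)) 1)ᶜ, ‖y‖ ^ β) * r ^ (β + n) := by
  have hf : IntegrableOn _ (ball (0 : EuclideanSpace ℝ (Fin n)) ρ ∩ {x | 0 < x i}) :=
    integrableOn_rpow_norm_add_smul_single hβ hr inter_subset_right
  have hβ0 : β ≤ 0 := by linarith [n.cast_nonneg (α := ℝ)]
  exact ⟨hf, le_setIntegral_rpow_norm_add_smul_single hβ0 hr hrρ hf,
    setIntegral_rpow_norm_add_smul_single_le hβ hr inter_subset_right⟩

end EuclideanSpace

/-- For `n ≥ 3` and `α ∈ [0,1)` there are constants `0 < c ≤ C`, depending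
only on `n` and `α`, such that for all `0 < r < ρ` the integral of `|x + r eₙ|^(2-2n+α)` over
`B_ρ ∩ {xₙ > 0}` is finite and comparable to `r^(2-n+α)` from above and below. -/
theorem halfspace_singular_integral_two_sided_bound
    (n : ℕ) (hn : 3 ≤ n) (α : ℝ) (hα1 : α < 1) :
    ∃ c C : ℝ, 0 < c ∧ c ≤ C ∧
      ∀ ρ r : ℝ, 0 < r → r < ρ →
        IntegrableOn
          (fun x : EuclideanSpace ℝ (Fin n) =>
            ‖x + r • EuclideanSpace.single (⟨n - 1, by omega⟩ : Fin n) (1 : ℝ)‖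
              ^ (2 - 2 * (n : ℝ) + α))
          (ball 0 ρ ∩ {x | 0 < x (⟨n - 1, by omega⟩ : Fin n)}) ∧
        c * r ^ (2 - (n : ℝ) + α) ≤
          (∫ x in ball (0 : EuclideanSpace ℝ (Fin n)) ρ
              ∩ {x | 0 < x (⟨n - 1, by omega⟩ : Fin n)},
            ‖x + r • EuclideanSpace.single (⟨n - 1, by omega⟩ : Fin n) (1 : ℝ)‖
              ^ (2 - 2 * (n : ℝ) + α)) ∧
        (∫ x in ball (0 : EuclideanSpace ℝ (Fin n)) ρ
              ∩ {x | 0 < x (⟨n - 1, by omega⟩ : Fin n)},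
            ‖x + r • EuclideanSpace.single (⟨n - 1, by omega⟩ : Fin n) (1 : ℝ)‖
              ^ (2 - 2 * (n : ℝ) + α)) ≤
          C * r ^ (2 - (n : ℝ) + α) := by
  set β : ℝ := 2 - 2 * (n : ℝ) + α
  have hβ : β < -(n : ℝ) := by
    have : (3 : ℝ) ≤ n := by exact_mod_cast hn
    linarith
  have hexp : β + n = 2 - (n : ℝ) + α := by ring
  have hvolpos : 0 < volume.real (ball (0 : EuclideanSpace ℝ (Fin n)) 1) :=
    ENNReal.toReal_pos (measure_ball_pos _ _ one_pos).ne' measure_ball_lt_top.ne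
  have hbounds := fun ρ r (hr : 0 < r) (hrρ : r ≤ ρ) => hexp ▸
    EuclideanSpace.integrableOn_and_setIntegral_rpow_norm_add_smul_single_bounds
      (i := ⟨n - 1, by omega⟩) hβ hr hrρ
  obtain ⟨-, hlow, hup⟩ := hbounds 1 1 one_pos le_rfl
  refine ⟨_, _, mul_pos (by positivity) hvolpos, by simpa using hlow.trans hup,
    fun ρ r hr hrρ => hbounds ρ r hr hrρ.le⟩
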